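/- Let f : {0,1}³ → ℂ, let m ≥ 5, and let u_j = [a_j, b_j] (1 ≤ j ≤ m) be pairwise linearly independent unary signatures. If ∂^{i}_{u_j}(f) is of product type for all i ∈ {1,2,3} and all 1 ≤ j ≤ m, then f is of product type. -/
import Mathlib


/-- `h` is in `ℰ`: its support is contained in a pair of antipodal points
`{α, ᾱ}` (over `ℤ₂`, the complement `ᾱ` is `α + 1`). -/
def InE {ι : Type*} (h : (ι → ZMod 2) → ℂ) : Prop :=
  ∃ α : ι → ZMod 2, ∀ x, h x ≠ 0 → x = α ∨ x = α + 1

/-- `f` is of product type (`f ∈ 𝒫`): it factors over a partition of its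
variables into signatures from `ℰ`. -/
def IsProductType {ι : Type*} [Fintype ι] [DecidableEq ι]
    (f : (ι → ZMod 2) → ℂ) : Prop :=
  ∃ (k : ℕ) (I : Fin k → Finset ι)
    (g : (j : Fin k) → ({i // i ∈ I j} → ZMod 2) → ℂ),
    (∀ j, (I j).Nonempty) ∧
    (∀ j j', j ≠ j' → Disjoint (I j) (I j')) ∧
    (∀ i : ι, ∃ j, i ∈ I j) ∧
    (∀ j, InE (g j)) ∧
    ∀ x : ι → ZMod 2, f x = ∏ j, g j (fun i => x i.1)

/-- `∂^{i}_{[a,b]}(f)`: connect the unary signature `[a,b]` to the `i`-th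
variable of the ternary signature `f`. -/
def del (f : (Fin 3 → ZMod 2) → ℂ) (i : Fin 3) (a b : ℂ) :
    (Fin 2 → ZMod 2) → ℂ :=
  fun y => a * f (i.insertNth 0 y) + b * f (i.insertNth 1 y)

lemma zmod2_cases : ∀ z : ZMod 2, z = 0 ∨ z = 1 := by decide
lemma zmod2_add_self : ∀ z : ZMod 2, z + z = 0 := by decide
lemma zmod2_one_ne_zero : (1 : ZMod 2) ≠ 0 := by decide

lemma ins0 (v : ZMod 2) (y : Fin 2 → ZMod 2) : (0:Fin 3).insertNth v y = ![v, y 0, y 1] := by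
  funext i; fin_cases i <;> rfl
lemma ins1 (v : ZMod 2) (y : Fin 2 → ZMod 2) : (1:Fin 3).insertNth v y = ![y 0, v, y 1] := by
  funext i; fin_cases i <;> rfl
lemma ins2 (v : ZMod 2) (y : Fin 2 → ZMod 2) : (2:Fin 3).insertNth v y = ![y 0, y 1, v] := by
  funext i; fin_cases i <;> rfl
lemma del0 (f : (Fin 3 → ZMod 2) → ℂ) (a b : ℂ) (y : Fin 2 → ZMod 2) :
    del f 0 a b y = a * f ![0, y 0, y 1] + b * f ![1, y 0, y 1] := by
  simp only [del, ins0]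
lemma del1 (f : (Fin 3 → ZMod 2) → ℂ) (a b : ℂ) (y : Fin 2 → ZMod 2) :
    del f 1 a b y = a * f ![y 0, 0, y 1] + b * f ![y 0, 1, y 1] := by
  simp only [del, ins1]
lemma del2 (f : (Fin 3 → ZMod 2) → ℂ) (a b : ℂ) (y : Fin 2 → ZMod 2) :
    del f 2 a b y = a * f ![y 0, y 1, 0] + b * f ![y 0, y 1, 1] := by
  simp only [del, ins2]
lemma vec3_eq (x : Fin 3 → ZMod 2) : x = ![x 0, x 1, x 2] := by
  funext i; fin_cases i <;> rfl
lemma vec2_eq (x : Fin 2 → ZMod 2) : x = ![x 0, x 1] := by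
  funext i; fin_cases i <;> rfl
lemma sA0 (x : Fin 3 → ZMod 2) : (fun t => x ((0:Fin 3).succAbove t)) = ![x 1, x 2] := by
  funext t; fin_cases t <;> rfl
lemma sA1 (x : Fin 3 → ZMod 2) : (fun t => x ((1:Fin 3).succAbove t)) = ![x 0, x 2] := by
  funext t; fin_cases t <;> rfl
lemma sA2 (x : Fin 3 → ZMod 2) : (fun t => x ((2:Fin 3).succAbove t)) = ![x 0, x 1] := by
  funext t; fin_cases t <;> rfl

lemma lin2 {x y a1 b1 a2 b2 : ℂ} (h1 : a1*x + b1*y = 0) (h2 : a2*x + b2*y = 0)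
    (hd : a1*b2 ≠ a2*b1) : x = 0 ∧ y = 0 := by
  have hd' : a1*b2 - a2*b1 ≠ 0 := sub_ne_zero.mpr hd
  constructor
  · have : x * (a1*b2 - a2*b1) = 0 := by linear_combination b2 * h1 - b1 * h2
    exact (mul_eq_zero.mp this).resolve_right hd'
  · have : y * (a1*b2 - a2*b1) = 0 := by linear_combination a1 * h2 - a2 * h1
    exact (mul_eq_zero.mp this).resolve_right hd'

lemma quad3 {A B C a1 b1 a2 b2 a3 b3 : ℂ}
    (h1 : A*a1^2 + B*(a1*b1) + C*b1^2 = 0)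
    (h2 : A*a2^2 + B*(a2*b2) + C*b2^2 = 0)
    (h3 : A*a3^2 + B*(a3*b3) + C*b3^2 = 0)
    (d12 : a1*b2 ≠ a2*b1) (d13 : a1*b3 ≠ a3*b1) (d23 : a2*b3 ≠ a3*b2) :
    A = 0 ∧ B = 0 ∧ C = 0 := by
  have hd : (a1*b2-a2*b1)*(a1*b3-a3*b1)*(a2*b3-a3*b2) ≠ 0 :=
    mul_ne_zero (mul_ne_zero (sub_ne_zero.mpr d12) (sub_ne_zero.mpr d13)) (sub_ne_zero.mpr d23)
  refine ⟨?_, ?_, ?_⟩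
  · have : A * ((a1*b2-a2*b1)*(a1*b3-a3*b1)*(a2*b3-a3*b2)) = 0 := by
      linear_combination (b2*b3*(a2*b3-a3*b2)) * h1 - (b1*b3*(a1*b3-a3*b1)) * h2 + (b1*b2*(a1*b2-a2*b1)) * h3
    exact (mul_eq_zero.mp this).resolve_right hd
  · have : B * ((a1*b2-a2*b1)*(a1*b3-a3*b1)*(a2*b3-a3*b2)) = 0 := by
      linear_combination (-(a2^2*b3^2-a3^2*b2^2)) * h1 + (a1^2*b3^2-a3^2*b1^2) * h2 - (a1^2*b2^2-a2^2*b1^2) * h3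
    exact (mul_eq_zero.mp this).resolve_right hd
  · have : C * ((a1*b2-a2*b1)*(a1*b3-a3*b1)*(a2*b3-a3*b2)) = 0 := by
      linear_combination (a2*a3*(a2*b3-a3*b2)) * h1 - (a1*a3*(a1*b3-a3*b1)) * h2 + (a1*a2*(a1*b2-a2*b1)) * h3
    exact (mul_eq_zero.mp this).resolve_right hd

lemma rank1 {e f g h : ℂ} (hdet : e*h = f*g) :
    ∃ u0 u1 v0 v1 : ℂ, e = u0*v0 ∧ f = u0*v1 ∧ g = u1*v0 ∧ h = u1*v1 := by
  by_cases he : e = 0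
  · rw [he, zero_mul] at hdet
    rcases mul_eq_zero.mp hdet.symm with hf | hg
    · exact ⟨0, 1, g, h, by rw [he]; ring, by rw [hf]; ring, by ring, by ring⟩
    · exact ⟨f, h, 0, 1, by rw [he]; ring, by ring, by rw [hg]; ring, by ring⟩
  · refine ⟨e, g, 1, f/e, by ring, by field_simp, by ring, ?_⟩
    field_simp
    linear_combination hdet

lemma dep2 {p0 p1 q0 q1 : ℂ} (h : p0*q1 = p1*q0) :
    ∃ r0 r1 c d : ℂ, p0 = c*r0 ∧ p1 = c*r1 ∧ q0 = d*r0 ∧ q1 = d*r1 := by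
  by_cases hp0 : p0 = 0
  · by_cases hp1 : p1 = 0
    · exact ⟨q0, q1, 0, 1, by rw [hp0]; ring, by rw [hp1]; ring, by ring, by ring⟩
    · have hq0 : q0 = 0 := by
        rw [hp0, zero_mul] at h
        rcases mul_eq_zero.mp h.symm with h' | h'
        · exact absurd h' hp1
        · exact h'
      exact ⟨p0, p1, 1, q1/p1, by ring, by ring, by rw [hq0, hp0]; ring, by field_simp⟩
  · exact ⟨p0, p1, 1, q0/p0, by ring, by ring, by field_simp, by
      field_simp; linear_combination h⟩

lemma isProductType_of_inE {ι : Type*} [Fintype ι] [DecidableEq ι] [Nonempty ι]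
    {f : (ι → ZMod 2) → ℂ} (h : InE f) : IsProductType f := by
  obtain ⟨α, hα⟩ := h
  refine ⟨1, fun _ => Finset.univ, fun _ y => f (fun i => y ⟨i, Finset.mem_univ i⟩),
    fun _ => Finset.univ_nonempty, fun j j' hjj' => absurd (Subsingleton.elim j j') hjj',
    fun i => ⟨0, Finset.mem_univ i⟩, ?_, ?_⟩
  · intro j
    refine ⟨fun i => α i.1, fun y hy => ?_⟩
    rcases hα _ hy with h0 | h1
    · left; funext i; exact congrFun h0 i.1
    · right; funext i; exact congrFun h1 i.1
  · intro x
    rw [Fin.prod_univ_one]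

lemma isProductType_zero {ι : Type*} [Fintype ι] [DecidableEq ι] [Nonempty ι]
    {f : (ι → ZMod 2) → ℂ} (h : ∀ x, f x = 0) : IsProductType f :=
  isProductType_of_inE ⟨0, fun x hx => absurd (h x) hx⟩

lemma isProductType_smul {ι : Type*} [Fintype ι] [DecidableEq ι] [Nonempty ι]
    {f : (ι → ZMod 2) → ℂ} (c : ℂ) (h : IsProductType f) :
    IsProductType (fun x => c * f x) := by
  obtain ⟨k, I, g, hne, hdisj, hcov, hInE, hval⟩ := h
  obtain ⟨j0, hj0⟩ := hcov (Classical.arbitrary ι)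
  refine ⟨k, I, Function.update g j0 (fun y => c * g j0 y), hne, hdisj, hcov, ?_, ?_⟩
  · intro j
    by_cases hj : j = j0
    · subst hj
      obtain ⟨α, hα⟩ := hInE j
      exact ⟨α, fun y hy => hα y (by simpa using right_ne_zero_of_mul (by simpa using hy))⟩
    · simpa [Function.update_of_ne hj] using hInE j
  · intro x
    show c * f x = _
    rw [hval x, ← Finset.mul_prod_erase Finset.univ _ (Finset.mem_univ j0),
      ← Finset.mul_prod_erase Finset.univ
        (fun j => Function.update g j0 (fun y => c * g j0 y) j (fun i => x i.1))
        (Finset.mem_univ j0)]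
    rw [Function.update_self, mul_assoc]
    congr 1
    congr 1
    exact Finset.prod_congr rfl (fun j hj => by
      rw [Function.update_of_ne (Finset.ne_of_mem_erase hj)])

lemma isProductType_shift {ι : Type*} [Fintype ι] [DecidableEq ι]
    {f : (ι → ZMod 2) → ℂ} (c : ι → ZMod 2) (h : IsProductType f) :
    IsProductType (fun x => f (x + c)) := by
  obtain ⟨k, I, g, hne, hdisj, hcov, hInE, hval⟩ := h
  refine ⟨k, I, fun j y => g j (y + fun i => c i.1), hne, hdisj, hcov, ?_, ?_⟩
  · intro j
    obtain ⟨α, hα⟩ := hInE j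
    refine ⟨α + fun i => c i.1, fun y hy => ?_⟩
    rcases hα _ hy with h0 | h1
    · left; funext i
      have := congrFun h0 i
      simp only [Pi.add_apply] at this ⊢
      linear_combination (this : y i + c i.1 = α i) - zmod2_add_self (c i.1)
    · right; funext i
      have := congrFun h1 i
      simp only [Pi.add_apply, Pi.one_apply] at this ⊢
      linear_combination (this : y i + c i.1 = α i + 1) - zmod2_add_self (c i.1)
  · intro x
    show f (x + c) = _
    rw [hval (x + c)]
    exact Finset.prod_congr rfl (fun j _ => rfl)

lemma inE_of_all_eq {ι : Type*} (hss : ∀ x y : ι, x = y) (h : (ι → ZMod 2) → ℂ) : InE h := by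
  refine ⟨0, fun x _ => ?_⟩
  by_cases hne : Nonempty ι
  · obtain ⟨i0⟩ := hne
    rcases (by decide : ∀ z : ZMod 2, z = 0 ∨ z = 1) (x i0) with h0 | h1
    · left; funext i; rw [hss i i0, h0]; rfl
    · right; funext i; rw [hss i i0, h1]; simp
  · left; funext i; exact absurd ⟨i⟩ hne

lemma isProductType_glue {n : ℕ} (f : (Fin (n+1) → ZMod 2) → ℂ) (i : Fin (n+1))
    (u : ZMod 2 → ℂ) (w : (Fin n → ZMod 2) → ℂ) (hw : IsProductType w)
    (hf : ∀ x, f x = u (x i) * w (fun t => x (i.succAbove t))) : IsProductType f := by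
  classical
  obtain ⟨k, I, g, hne, hdisj, hcov, hInE, hval⟩ := hw
  set emb : Fin n ↪ Fin (n+1) := ⟨i.succAbove, Fin.succAbove_right_injective⟩ with hemb
  refine ⟨k+1, Fin.cons {i} (fun j' => (I j').map emb),
    Fin.cons (α := fun j => ({t // t ∈ Fin.cons (α := fun _ => Finset (Fin (n+1)))
        {i} (fun j' => (I j').map emb) j} → ZMod 2) → ℂ)
      (fun y => u (y ⟨i, Finset.mem_singleton_self i⟩))
      (fun j' y => g j' (fun s => y ⟨emb s.1, Finset.mem_map_of_mem _ s.2⟩)),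
    ?_, ?_, ?_, ?_, ?_⟩
  · intro j
    rcases Fin.eq_zero_or_eq_succ j with rfl | ⟨j', rfl⟩
    · simp
    · simp only [Fin.cons_succ]
      exact (hne j').map
  · intro j j' hjj'
    rcases Fin.eq_zero_or_eq_succ j with rfl | ⟨j1, rfl⟩ <;>
      rcases Fin.eq_zero_or_eq_succ j' with rfl | ⟨j2, rfl⟩
    · exact absurd rfl hjj'
    · simp only [Fin.cons_zero, Fin.cons_succ, Finset.disjoint_singleton_left,
        Finset.mem_map]
      rintro ⟨s, _, hs⟩
      exact Fin.succAbove_ne i s hs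
    · simp only [Fin.cons_zero, Fin.cons_succ, Finset.disjoint_singleton_right,
        Finset.mem_map]
      rintro ⟨s, _, hs⟩
      exact Fin.succAbove_ne i s hs
    · simp only [Fin.cons_succ]
      rw [Finset.disjoint_map]
      exact hdisj j1 j2 (fun h => hjj' (by rw [h]))
  · intro i'
    by_cases hi : i' = i
    · exact ⟨0, by simp [hi]⟩
    · obtain ⟨t, ht⟩ := Fin.exists_succAbove_eq hi
      obtain ⟨j', hj'⟩ := hcov t
      exact ⟨j'.succ, by simp only [Fin.cons_succ, Finset.mem_map]; exact ⟨t, hj', ht⟩⟩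
  · intro j
    rcases Fin.eq_zero_or_eq_succ j with rfl | ⟨j', rfl⟩
    · exact inE_of_all_eq (fun x y => Subtype.ext (by
        rw [Finset.mem_singleton.mp x.2, Finset.mem_singleton.mp y.2])) _
    · obtain ⟨α, hα⟩ := hInE j'
      have pre : ∀ t : {t // t ∈ (I j').map emb}, {s // s ∈ I j' ∧ emb s = t.1} := by
        intro t
        have := Finset.mem_map.mp t.2
        exact ⟨this.choose, this.choose_spec.1, this.choose_spec.2⟩
      refine ⟨fun t => α ⟨(pre t).1, (pre t).2.1⟩, fun y hy => ?_⟩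
      have hy' : g j' (fun s => y ⟨emb s.1, Finset.mem_map_of_mem _ s.2⟩) ≠ 0 := hy
      rcases hα _ hy' with h0 | h1
      · left; funext t
        have h2 : y t = y ⟨emb (pre t).1, Finset.mem_map_of_mem _ (pre t).2.1⟩ :=
          congrArg y (Subtype.ext (pre t).2.2.symm)
        rw [h2]
        exact congrFun h0 ⟨(pre t).1, (pre t).2.1⟩
      · right; funext t
        have h2 : y t = y ⟨emb (pre t).1, Finset.mem_map_of_mem _ (pre t).2.1⟩ :=
          congrArg y (Subtype.ext (pre t).2.2.symm)
        rw [h2]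
        exact congrFun h1 ⟨(pre t).1, (pre t).2.1⟩
  · intro x
    rw [hf x, Fin.prod_univ_succ, hval]
    rfl

lemma bin_cases (g : (Fin 2 → ZMod 2) → ℂ) (h : IsProductType g) :
    (∃ p q : ZMod 2 → ℂ, ∀ x, g x = p (x 0) * q (x 1)) ∨
    (∃ s : ZMod 2, ∀ x, g x ≠ 0 → x 0 + x 1 = s) := by
  classical
  obtain ⟨k, I, gg, hne, hdisj, hcov, hInE, hval⟩ := h
  obtain ⟨j0, hj0⟩ := hcov 0
  obtain ⟨j1, hj1⟩ := hcov 1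
  by_cases hj : j0 = j1
  · subst hj
    right
    obtain ⟨α, hα⟩ := hInE j0
    refine ⟨α ⟨0, hj0⟩ + α ⟨1, hj1⟩, fun x hx => ?_⟩
    have hx' : gg j0 (fun i => x i.1) ≠ 0 := by
      intro h0
      apply hx
      rw [hval x]
      exact Finset.prod_eq_zero (Finset.mem_univ j0) h0
    rcases hα _ hx' with h0 | h1
    · rw [show x 0 = α ⟨0, hj0⟩ from congrFun h0 ⟨0, hj0⟩,
        show x 1 = α ⟨1, hj1⟩ from congrFun h0 ⟨1, hj1⟩]
    · rw [show x 0 = α ⟨0, hj0⟩ + 1 from congrFun h1 ⟨0, hj0⟩,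
        show x 1 = α ⟨1, hj1⟩ + 1 from congrFun h1 ⟨1, hj1⟩]
      ring_nf
      linear_combination (by decide : (1:ZMod 2) + 1 = 0)
  · left
    have honly : ∀ j, j = j0 ∨ j = j1 := by
      intro j
      obtain ⟨i, hi⟩ := hne j
      rcases (by decide : ∀ z : Fin 2, z = 0 ∨ z = 1) i with rfl | rfl
      · left
        by_contra hne'
        exact Finset.disjoint_left.mp (hdisj j j0 hne') hi hj0
      · right
        by_contra hne'
        exact Finset.disjoint_left.mp (hdisj j j1 hne') hi hj1
    have h0notin1 : (0 : Fin 2) ∉ I j1 := fun h0 =>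
      Finset.disjoint_left.mp (hdisj j0 j1 hj) hj0 h0
    have h1notin0 : (1 : Fin 2) ∉ I j0 := fun h1 =>
      Finset.disjoint_left.mp (hdisj j1 j0 (Ne.symm hj)) hj1 h1
    have huniv : (Finset.univ : Finset (Fin k)) = {j0, j1} := by
      apply Finset.Subset.antisymm
      · intro j _
        rcases honly j with rfl | rfl <;> simp
      · exact Finset.subset_univ _
    refine ⟨fun c => gg j0 (fun _ => c), fun c => gg j1 (fun _ => c), fun x => ?_⟩
    rw [hval x, huniv, Finset.prod_pair hj]
    congr 1
    · congr 1
      funext i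
      have hi : i.1 = 0 := by
        rcases (by decide : ∀ z : Fin 2, z = 0 ∨ z = 1) i.1 with h | h
        · exact h
        · exact absurd (h ▸ i.2) h1notin0
      rw [hi]
    · congr 1
      funext i
      have hi : i.1 = 1 := by
        rcases (by decide : ∀ z : Fin 2, z = 0 ∨ z = 1) i.1 with h | h
        · exact absurd (h ▸ i.2) h0notin1
        · exact h
      rw [hi]

lemma caseB (f : (Fin 3 → ZMod 2) → ℂ)
    (hz001 : f ![0,0,1] = 0) (hz101 : f ![1,0,1] = 0)
    (hz010 : f ![0,1,0] = 0) (hz110 : f ![1,1,0] = 0)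
    {a1 b1 a2 b2 a3 b3 : ℂ}
    (h12 : a1*b2 ≠ a2*b1) (h13 : a1*b3 ≠ a3*b1) (h23 : a2*b3 ≠ a3*b2)
    (hp1 : IsProductType (del f 1 a1 b1))
    (hp2 : IsProductType (del f 1 a2 b2))
    (hp3 : IsProductType (del f 1 a3 b3)) :
    IsProductType f := by
  classical
  by_cases hdep : f ![0,0,0] * f ![1,1,1] = f ![1,0,0] * f ![0,1,1]
  · obtain ⟨r0, r1, c, d, hP0, hP1, hQ0, hQ1⟩ := dep2 hdep
    set r : ZMod 2 → ℂ := fun t => if t = 0 then r0 else r1 with hr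
    set e : (Fin 2 → ZMod 2) → ℂ :=
      fun y => if y 0 = 0 ∧ y 1 = 0 then c else if y 0 = 1 ∧ y 1 = 1 then d else 0 with he
    have er0 : r 0 = r0 := by simp [hr]
    have er1 : r 1 = r1 := by simp [hr, zmod2_one_ne_zero]
    have e00 : e ![0,0] = c := by simp [he]
    have e11 : e ![1,1] = d := by simp [he, zmod2_one_ne_zero]
    have e01 : e ![0,1] = 0 := by simp [he, zmod2_one_ne_zero]
    have e10 : e ![1,0] = 0 := by simp [he, zmod2_one_ne_zero]
    have hf : ∀ x, f x = r (x 0) * e ![x 1, x 2] := by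
      intro x
      have hx : f x = f ![x 0, x 1, x 2] := by rw [← vec3_eq]
      rcases zmod2_cases (x 0) with h0 | h0 <;> rcases zmod2_cases (x 1) with h1 | h1 <;>
        rcases zmod2_cases (x 2) with h2 | h2 <;> rw [hx, h0, h1, h2] <;>
        first
        | (rw [hP0, er0, e00]; ring)
        | (rw [hz001, e01]; ring)
        | (rw [hz010, e10]; ring)
        | (rw [hQ0, er0, e11]; ring)
        | (rw [hP1, er1, e00]; ring)
        | (rw [hz101, e01]; ring)
        | (rw [hz110, e10]; ring)
        | (rw [hQ1, er1, e11]; ring)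
    have hePT : IsProductType e := by
      apply isProductType_of_inE
      refine ⟨![0,0], fun y hy => ?_⟩
      by_cases hc : y 0 = 0 ∧ y 1 = 0
      · left; rw [vec2_eq y, hc.1, hc.2]
      · by_cases hd' : y 0 = 1 ∧ y 1 = 1
        · right
          rw [vec2_eq y, hd'.1, hd'.2]
          decide
        · exfalso
          apply hy
          rw [he]
          simp only [if_neg hc, if_neg hd']
    exact isProductType_glue f 0 r e hePT (fun x => by rw [sA0 x]; exact hf x)
  · have hdep' : f ![0,0,0] * f ![1,1,1] - f ![1,0,0] * f ![0,1,1] ≠ 0 := sub_ne_zero.mpr hdep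
    by_cases hA : f ![0,1,1] = 0 ∧ f ![1,0,0] = 0
    · apply isProductType_of_inE
      refine ⟨![0,0,0], fun x hx => ?_⟩
      rw [vec3_eq x] at hx
      rcases zmod2_cases (x 0) with h0 | h0 <;> rcases zmod2_cases (x 1) with h1 | h1 <;>
        rcases zmod2_cases (x 2) with h2 | h2 <;> rw [h0, h1, h2] at hx
      · left; rw [vec3_eq x, h0, h1, h2]
      · exact absurd hz001 hx
      · exact absurd hz010 hx
      · exact absurd hA.1 hx
      · exact absurd hA.2 hx
      · exact absurd hz101 hx
      · exact absurd hz110 hx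
      · right; rw [vec3_eq x, h0, h1, h2]; decide
    · by_cases hB : f ![0,0,0] = 0 ∧ f ![1,1,1] = 0
      · apply isProductType_of_inE
        refine ⟨![1,0,0], fun x hx => ?_⟩
        rw [vec3_eq x] at hx
        rcases zmod2_cases (x 0) with h0 | h0 <;> rcases zmod2_cases (x 1) with h1 | h1 <;>
          rcases zmod2_cases (x 2) with h2 | h2 <;> rw [h0, h1, h2] at hx
        · exact absurd hB.1 hx
        · exact absurd hz001 hx
        · exact absurd hz010 hx
        · right; rw [vec3_eq x, h0, h1, h2]; decide
        · left; rw [vec3_eq x, h0, h1, h2]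
        · exact absurd hz101 hx
        · exact absurd hz110 hx
        · exact absurd hB.2 hx
      · exfalso
        have key : ∀ aa bb : ℂ, IsProductType (del f 1 aa bb) → aa = 0 ∨ bb = 0 := by
          intro aa bb hp
          have hg00 : del f 1 aa bb ![0,0] = aa * f ![0,0,0] := by
            simp only [del1, Matrix.cons_val_zero, Matrix.cons_val_one, Matrix.head_cons]
            rw [hz010]; ring
          have hg01 : del f 1 aa bb ![0,1] = bb * f ![0,1,1] := by
            simp only [del1, Matrix.cons_val_zero, Matrix.cons_val_one, Matrix.head_cons]
            rw [hz001]; ring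
          have hg10 : del f 1 aa bb ![1,0] = aa * f ![1,0,0] := by
            simp only [del1, Matrix.cons_val_zero, Matrix.cons_val_one, Matrix.head_cons]
            rw [hz110]; ring
          have hg11 : del f 1 aa bb ![1,1] = bb * f ![1,1,1] := by
            simp only [del1, Matrix.cons_val_zero, Matrix.cons_val_one, Matrix.head_cons]
            rw [hz101]; ring
          rcases bin_cases _ hp with ⟨P, Q, hPQ⟩ | ⟨s, hs⟩
          · have h00 := hPQ ![0,0]
            have h01 := hPQ ![0,1]
            have h10 := hPQ ![1,0]
            have h11 := hPQ ![1,1]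
            simp only [Matrix.cons_val_zero, Matrix.cons_val_one, Matrix.head_cons]
              at h00 h01 h10 h11
            have hdet : (aa * f ![0,0,0]) * (bb * f ![1,1,1])
                = (bb * f ![0,1,1]) * (aa * f ![1,0,0]) := by
              rw [← hg00, ← hg11, ← hg01, ← hg10, h00, h11, h01, h10]; ring
            have hz : aa * bb * (f ![0,0,0] * f ![1,1,1] - f ![1,0,0] * f ![0,1,1]) = 0 := by
              linear_combination hdet
            rcases mul_eq_zero.mp hz with h | h
            · exact mul_eq_zero.mp h
            · exact absurd h hdep'
          · rcases zmod2_cases s with rfl | rfl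
            · have hv1 : del f 1 aa bb ![0,1] = 0 := by
                by_contra hne
                exact absurd (hs ![0,1] hne) (by decide)
              have hv2 : del f 1 aa bb ![1,0] = 0 := by
                by_contra hne
                exact absurd (hs ![1,0] hne) (by decide)
              rw [hg01] at hv1
              rw [hg10] at hv2
              by_cases hq0 : f ![0,1,1] = 0
              · have hp1ne : f ![1,0,0] ≠ 0 := fun h => hA ⟨hq0, h⟩
                exact Or.inl ((mul_eq_zero.mp hv2).resolve_right hp1ne)
              · exact Or.inr ((mul_eq_zero.mp hv1).resolve_right hq0)
            · have hv1 : del f 1 aa bb ![0,0] = 0 := by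
                by_contra hne
                exact absurd (hs ![0,0] hne) (by decide)
              have hv2 : del f 1 aa bb ![1,1] = 0 := by
                by_contra hne
                exact absurd (hs ![1,1] hne) (by decide)
              rw [hg00] at hv1
              rw [hg11] at hv2
              by_cases hp0 : f ![0,0,0] = 0
              · have hq1ne : f ![1,1,1] ≠ 0 := fun h => hB ⟨hp0, h⟩
                exact Or.inr ((mul_eq_zero.mp hv2).resolve_right hq1ne)
              · exact Or.inl ((mul_eq_zero.mp hv1).resolve_right hp0)
        have k1 := key a1 b1 hp1
        have k2 := key a2 b2 hp2
        have k3 := key a3 b3 hp3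
        rcases k1 with k1 | k1 <;> rcases k2 with k2 | k2 <;> rcases k3 with k3 | k3
        · exact h12 (by rw [k1, k2]; ring)
        · exact h12 (by rw [k1, k2]; ring)
        · exact h13 (by rw [k1, k3]; ring)
        · exact h23 (by rw [k2, k3]; ring)
        · exact h23 (by rw [k2, k3]; ring)
        · exact h13 (by rw [k1, k3]; ring)
        · exact h12 (by rw [k1, k2]; ring)
        · exact h12 (by rw [k1, k2]; ring)

theorem product_type_of_five_unaries (f : (Fin 3 → ZMod 2) → ℂ)
    (m : ℕ) (hm : 5 ≤ m) (a b : Fin m → ℂ)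
    (hli : ∀ j j', j ≠ j' → a j * b j' ≠ a j' * b j)
    (hprod : ∀ (i : Fin 3) (j : Fin m), IsProductType (del f i (a j) (b j))) :
    IsProductType f := by
  classical
  set T : Fin 5 → Fin m := fun t => Fin.castLE hm t with hT
  have hTinj : Function.Injective T := Fin.castLE_injective hm
  have hIndep : ∀ t t' : Fin 5, t ≠ t' → a (T t) * b (T t') ≠ a (T t') * b (T t) :=
    fun t t' h => hli _ _ (fun hh => h (hTinj hh))
  set P1 : Fin m → Prop := fun j =>
    (a j * f ![0,0,1] + b j * f ![1,0,1] = 0) ∧ (a j * f ![0,1,0] + b j * f ![1,1,0] = 0)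
    with hP1def
  set P2 : Fin m → Prop := fun j =>
    (a j * f ![0,0,0] + b j * f ![1,0,0] = 0) ∧ (a j * f ![0,1,1] + b j * f ![1,1,1] = 0)
    with hP2def
  set P0 : Fin m → Prop := fun j =>
    (a j * f ![0,0,0] + b j * f ![1,0,0]) * (a j * f ![0,1,1] + b j * f ![1,1,1])
      = (a j * f ![0,0,1] + b j * f ![1,0,1]) * (a j * f ![0,1,0] + b j * f ![1,1,0])
    with hP0def
  have tri : ∀ j : Fin m, P0 j ∨ P1 j ∨ P2 j := by
    intro j
    have hg00 : del f 0 (a j) (b j) ![0,0] = a j * f ![0,0,0] + b j * f ![1,0,0] := by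
      simp only [del0, Matrix.cons_val_zero, Matrix.cons_val_one, Matrix.head_cons]
    have hg01 : del f 0 (a j) (b j) ![0,1] = a j * f ![0,0,1] + b j * f ![1,0,1] := by
      simp only [del0, Matrix.cons_val_zero, Matrix.cons_val_one, Matrix.head_cons]
    have hg10 : del f 0 (a j) (b j) ![1,0] = a j * f ![0,1,0] + b j * f ![1,1,0] := by
      simp only [del0, Matrix.cons_val_zero, Matrix.cons_val_one, Matrix.head_cons]
    have hg11 : del f 0 (a j) (b j) ![1,1] = a j * f ![0,1,1] + b j * f ![1,1,1] := by
      simp only [del0, Matrix.cons_val_zero, Matrix.cons_val_one, Matrix.head_cons]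
    rcases bin_cases _ (hprod 0 j) with ⟨P, Q, hPQ⟩ | ⟨s, hs⟩
    · left
      have h00 := hPQ ![0,0]
      have h01 := hPQ ![0,1]
      have h10 := hPQ ![1,0]
      have h11 := hPQ ![1,1]
      simp only [Matrix.cons_val_zero, Matrix.cons_val_one, Matrix.head_cons]
        at h00 h01 h10 h11
      show (a j * f ![0,0,0] + b j * f ![1,0,0]) * (a j * f ![0,1,1] + b j * f ![1,1,1])
        = (a j * f ![0,0,1] + b j * f ![1,0,1]) * (a j * f ![0,1,0] + b j * f ![1,1,0])
      rw [← hg00, ← hg11, ← hg01, ← hg10, h00, h11, h01, h10]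
      ring
    · rcases zmod2_cases s with rfl | rfl
      · right; left
        constructor
        · rw [← hg01]; by_contra hne; exact absurd (hs ![0,1] hne) (by decide)
        · rw [← hg10]; by_contra hne; exact absurd (hs ![1,0] hne) (by decide)
      · right; right
        constructor
        · rw [← hg00]; by_contra hne; exact absurd (hs ![0,0] hne) (by decide)
        · rw [← hg11]; by_contra hne; exact absurd (hs ![1,1] hne) (by decide)
  set S1 : Finset (Fin 5) := Finset.univ.filter (fun t => P1 (T t)) with hS1
  set S2 : Finset (Fin 5) := Finset.univ.filter (fun t => P2 (T t) ∧ ¬ P1 (T t)) with hS2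
  set S0 : Finset (Fin 5) := Finset.univ.filter (fun t => ¬ P1 (T t) ∧ ¬ P2 (T t)) with hS0
  by_cases hc1 : 2 ≤ S1.card
  · -- two independent unaries with off-diagonal vanishing
    obtain ⟨t, ht, t', ht', htt⟩ := Finset.one_lt_card.mp hc1
    rw [hS1, Finset.mem_filter] at ht ht'
    obtain ⟨hz1, hz2⟩ := lin2 ht.2.1 ht'.2.1 (hIndep t t' htt)
    obtain ⟨hz3, hz4⟩ := lin2 ht.2.2 ht'.2.2 (hIndep t t' htt)
    exact caseB f hz1 hz2 hz3 hz4 (hIndep 0 1 (by decide)) (hIndep 0 2 (by decide))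
      (hIndep 1 2 (by decide)) (hprod 1 (T 0)) (hprod 1 (T 1)) (hprod 1 (T 2))
  · by_cases hc2 : 2 ≤ S2.card
    · -- diagonal vanishing: flip third coordinate and use caseB
      obtain ⟨t, ht, t', ht', htt⟩ := Finset.one_lt_card.mp hc2
      rw [hS2, Finset.mem_filter] at ht ht'
      obtain ⟨hz1, hz2⟩ := lin2 ht.2.1.1 ht'.2.1.1 (hIndep t t' htt)
      obtain ⟨hz3, hz4⟩ := lin2 ht.2.1.2 ht'.2.1.2 (hIndep t t' htt)
      -- hz1 : f ![0,0,0] = 0, hz2 : f ![1,0,0] = 0, hz3 : f ![0,1,1] = 0, hz4 : f ![1,1,1] = 0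
      set f' : (Fin 3 → ZMod 2) → ℂ := fun x => f (x + ![0,0,1]) with hf'
      have hdel' : ∀ aa bb : ℂ, del f' 1 aa bb = fun y => del f 1 aa bb (y + ![0,1]) := by
        intro aa bb
        funext y
        have hv0 : (![y 0, (0:ZMod 2), y 1] : Fin 3 → ZMod 2) + ![0,0,1]
            = ![y 0, 0, y 1 + 1] := by
          funext i; fin_cases i <;> simp
        have hv1 : (![y 0, (1:ZMod 2), y 1] : Fin 3 → ZMod 2) + ![0,0,1]
            = ![y 0, 1, y 1 + 1] := by
          funext i; fin_cases i <;> simp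
        have h0 : (y + (![0,1] : Fin 2 → ZMod 2)) 0 = y 0 := by simp
        have h1 : (y + (![0,1] : Fin 2 → ZMod 2)) 1 = y 1 + 1 := by simp
        rw [del1, del1, h0, h1]
        show aa * f ((![y 0, 0, y 1] : Fin 3 → ZMod 2) + ![0,0,1])
            + bb * f ((![y 0, 1, y 1] : Fin 3 → ZMod 2) + ![0,0,1]) = _
        rw [hv0, hv1]
      have hPT' : ∀ t'' : Fin 5, IsProductType (del f' 1 (a (T t'')) (b (T t''))) := by
        intro t''
        rw [hdel']
        exact isProductType_shift ![0,1] (hprod 1 (T t''))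
      have hcB : IsProductType f' := by
        apply caseB f' (a1 := a (T 0)) (b1 := b (T 0)) (a2 := a (T 1)) (b2 := b (T 1))
          (a3 := a (T 2)) (b3 := b (T 2))
        · show f ((![0,0,1] : Fin 3 → ZMod 2) + ![0,0,1]) = 0
          rw [show (![0,0,1] : Fin 3 → ZMod 2) + ![0,0,1] = ![0,0,0] from by decide]
          exact hz1
        · show f ((![1,0,1] : Fin 3 → ZMod 2) + ![0,0,1]) = 0
          rw [show (![1,0,1] : Fin 3 → ZMod 2) + ![0,0,1] = ![1,0,0] from by decide]
          exact hz2
        · show f ((![0,1,0] : Fin 3 → ZMod 2) + ![0,0,1]) = 0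
          rw [show (![0,1,0] : Fin 3 → ZMod 2) + ![0,0,1] = ![0,1,1] from by decide]
          exact hz3
        · show f ((![1,1,0] : Fin 3 → ZMod 2) + ![0,0,1]) = 0
          rw [show (![1,1,0] : Fin 3 → ZMod 2) + ![0,0,1] = ![1,1,1] from by decide]
          exact hz4
        · exact hIndep 0 1 (by decide)
        · exact hIndep 0 2 (by decide)
        · exact hIndep 1 2 (by decide)
        · exact hPT' 0
        · exact hPT' 1
        · exact hPT' 2
      have hback := isProductType_shift (f := f') ![0,0,1] hcB
      have : (fun x => f' (x + ![0,0,1])) = f := by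
        funext x
        show f (x + ![0,0,1] + ![0,0,1]) = f x
        congr 1
        funext i
        simp only [Pi.add_apply]
        rw [add_assoc, zmod2_add_self, add_zero]
      rwa [this] at hback
    · -- at least three with degenerate pencil
      have hcard : 3 ≤ S0.card := by
        have hcover : (Finset.univ : Finset (Fin 5)) ⊆ S0 ∪ S1 ∪ S2 := by
          intro t _
          simp only [hS0, hS1, hS2, Finset.mem_union, Finset.mem_filter, Finset.mem_univ,
            true_and]
          by_cases h1 : P1 (T t)
          · tauto
          · by_cases h2 : P2 (T t) <;> tauto
        have h5 : (5 : ℕ) ≤ (S0 ∪ S1 ∪ S2).card := by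
          calc (5 : ℕ) = (Finset.univ : Finset (Fin 5)).card := by simp
          _ ≤ (S0 ∪ S1 ∪ S2).card := Finset.card_le_card hcover
        have hle : (S0 ∪ S1 ∪ S2).card ≤ S0.card + S1.card + S2.card :=
          le_trans (Finset.card_union_le _ _)
            (Nat.add_le_add_right (Finset.card_union_le _ _) _)
        omega
      obtain ⟨t1, ht1, t2, ht2, t3, ht3, h12', h13', h23'⟩ := Finset.two_lt_card.mp hcard
      rw [hS0, Finset.mem_filter] at ht1 ht2 ht3
      have hQ : ∀ t : Fin 5, ¬ P1 (T t) ∧ ¬ P2 (T t) → P0 (T t) := by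
        intro t ht
        rcases tri (T t) with h | h | h
        · exact h
        · exact absurd h ht.1
        · exact absurd h ht.2
      have e1 := hQ t1 ht1.2
      have e2 := hQ t2 ht2.2
      have e3 := hQ t3 ht3.2
      rw [hP0def] at e1 e2 e3
      obtain ⟨hA, hB, hC⟩ := quad3
        (A := f ![0,0,0] * f ![0,1,1] - f ![0,0,1] * f ![0,1,0])
        (B := f ![0,0,0] * f ![1,1,1] + f ![1,0,0] * f ![0,1,1]
          - f ![0,0,1] * f ![1,1,0] - f ![1,0,1] * f ![0,1,0])
        (C := f ![1,0,0] * f ![1,1,1] - f ![1,0,1] * f ![1,1,0])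
        (by linear_combination e1) (by linear_combination e2) (by linear_combination e3)
        (hIndep t1 t2 h12') (hIndep t1 t3 h13') (hIndep t2 t3 h23')
      obtain ⟨α0, α1, β0, β1, h000, h001, h010, h011⟩ :=
        rank1 (e := f ![0,0,0]) (f := f ![0,0,1]) (g := f ![0,1,0]) (h := f ![0,1,1])
          (by linear_combination hA)
      obtain ⟨γ0, γ1, δ0, δ1, h100, h101, h110, h111⟩ :=
        rank1 (e := f ![1,0,0]) (f := f ![1,0,1]) (g := f ![1,1,0]) (h := f ![1,1,1])
          (by linear_combination hC)
      rw [h000, h001, h010, h011, h100, h101, h110, h111] at hB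
      have hmix : (α0*γ1 - α1*γ0) * (β0*δ1 - β1*δ0) = 0 := by linear_combination hB
      rcases mul_eq_zero.mp hmix with hcol | hrow
      · -- common column space: f x = r (x 1) * w (x 0, x 2)
        obtain ⟨r0, r1, c0, c1, hα0, hα1, hγ0, hγ1⟩ :=
          dep2 (p0 := α0) (p1 := α1) (q0 := γ0) (q1 := γ1)
            (by linear_combination hcol)
        set r : ZMod 2 → ℂ := fun t => if t = 0 then r0 else r1 with hr
        set w : (Fin 2 → ZMod 2) → ℂ := fun y =>
          if y 0 = 0 then c0 * (if y 1 = 0 then β0 else β1)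
          else c1 * (if y 1 = 0 then δ0 else δ1) with hw
        have er0 : r 0 = r0 := by simp [hr]
        have er1 : r 1 = r1 := by simp [hr, zmod2_one_ne_zero]
        have w00 : w ![0,0] = c0 * β0 := by simp [hw]
        have w01 : w ![0,1] = c0 * β1 := by simp [hw, zmod2_one_ne_zero]
        have w10 : w ![1,0] = c1 * δ0 := by simp [hw, zmod2_one_ne_zero]
        have w11 : w ![1,1] = c1 * δ1 := by simp [hw, zmod2_one_ne_zero]
        have hf : ∀ x, f x = r (x 1) * w ![x 0, x 2] := by
          intro x
          have hx : f x = f ![x 0, x 1, x 2] := by rw [← vec3_eq]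
          rcases zmod2_cases (x 0) with h0 | h0 <;> rcases zmod2_cases (x 1) with h1 | h1 <;>
            rcases zmod2_cases (x 2) with h2 | h2 <;> rw [hx, h0, h1, h2]
          · rw [h000, er0, w00]; linear_combination β0 * hα0
          · rw [h001, er0, w01]; linear_combination β1 * hα0
          · rw [h010, er1, w00]; linear_combination β0 * hα1
          · rw [h011, er1, w01]; linear_combination β1 * hα1
          · rw [h100, er0, w10]; linear_combination δ0 * hγ0
          · rw [h101, er0, w11]; linear_combination δ1 * hγ0
          · rw [h110, er1, w10]; linear_combination δ0 * hγ1
          · rw [h111, er1, w11]; linear_combination δ1 * hγ1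
        by_cases hrz : r0 = 0 ∧ r1 = 0
        · refine isProductType_zero (fun x => ?_)
          rw [hf x]
          rcases zmod2_cases (x 1) with h | h <;> rw [h]
          · rw [er0, hrz.1]; ring
          · rw [er1, hrz.2]; ring
        · obtain ⟨jj, hjj⟩ : ∃ jj, a jj * r 0 + b jj * r 1 ≠ 0 := by
            by_contra hcon
            push_neg at hcon
            obtain ⟨hu, hv'⟩ := lin2 (hcon (T 0)) (hcon (T 1)) (hIndep 0 1 (by decide))
            rw [er0] at hu; rw [er1] at hv'
            exact hrz ⟨hu, hv'⟩
          have hdel : del f 1 (a jj) (b jj) = fun y => (a jj * r 0 + b jj * r 1) * w y := by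
            funext y
            rw [del1]
            have e1' : f ![y 0, 0, y 1] = r 0 * w ![y 0, y 1] := hf ![y 0, 0, y 1]
            have e2' : f ![y 0, 1, y 1] = r 1 * w ![y 0, y 1] := hf ![y 0, 1, y 1]
            rw [e1', e2', ← vec2_eq y]
            ring
          have hwPT : IsProductType w := by
            have hpt1 : IsProductType (fun y => (a jj * r 0 + b jj * r 1) * w y) :=
              hdel ▸ hprod 1 jj
            have hpt2 := isProductType_smul (a jj * r 0 + b jj * r 1)⁻¹ hpt1
            have heq : (fun y => (a jj * r 0 + b jj * r 1)⁻¹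
                * ((a jj * r 0 + b jj * r 1) * w y)) = w := by
              funext y; field_simp
            rwa [heq] at hpt2
          exact isProductType_glue f 1 r w hwPT (fun x => by rw [sA1 x]; exact hf x)
      · -- common row space: f x = r (x 2) * w (x 0, x 1)
        obtain ⟨r0, r1, d0, d1, hβ0, hβ1, hδ0, hδ1⟩ :=
          dep2 (p0 := β0) (p1 := β1) (q0 := δ0) (q1 := δ1)
            (by linear_combination hrow)
        set r : ZMod 2 → ℂ := fun t => if t = 0 then r0 else r1 with hr
        set w : (Fin 2 → ZMod 2) → ℂ := fun y =>
          if y 0 = 0 then d0 * (if y 1 = 0 then α0 else α1)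
          else d1 * (if y 1 = 0 then γ0 else γ1) with hw
        have er0 : r 0 = r0 := by simp [hr]
        have er1 : r 1 = r1 := by simp [hr, zmod2_one_ne_zero]
        have w00 : w ![0,0] = d0 * α0 := by simp [hw]
        have w01 : w ![0,1] = d0 * α1 := by simp [hw, zmod2_one_ne_zero]
        have w10 : w ![1,0] = d1 * γ0 := by simp [hw, zmod2_one_ne_zero]
        have w11 : w ![1,1] = d1 * γ1 := by simp [hw, zmod2_one_ne_zero]
        have hf : ∀ x, f x = r (x 2) * w ![x 0, x 1] := by
          intro x
          have hx : f x = f ![x 0, x 1, x 2] := by rw [← vec3_eq]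
          rcases zmod2_cases (x 0) with h0 | h0 <;> rcases zmod2_cases (x 1) with h1 | h1 <;>
            rcases zmod2_cases (x 2) with h2 | h2 <;> rw [hx, h0, h1, h2]
          · rw [h000, er0, w00]; linear_combination α0 * hβ0
          · rw [h001, er1, w00]; linear_combination α0 * hβ1
          · rw [h010, er0, w01]; linear_combination α1 * hβ0
          · rw [h011, er1, w01]; linear_combination α1 * hβ1
          · rw [h100, er0, w10]; linear_combination γ0 * hδ0
          · rw [h101, er1, w10]; linear_combination γ0 * hδ1
          · rw [h110, er0, w11]; linear_combination γ1 * hδ0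
          · rw [h111, er1, w11]; linear_combination γ1 * hδ1
        by_cases hrz : r0 = 0 ∧ r1 = 0
        · refine isProductType_zero (fun x => ?_)
          rw [hf x]
          rcases zmod2_cases (x 2) with h | h <;> rw [h]
          · rw [er0, hrz.1]; ring
          · rw [er1, hrz.2]; ring
        · obtain ⟨jj, hjj⟩ : ∃ jj, a jj * r 0 + b jj * r 1 ≠ 0 := by
            by_contra hcon
            push_neg at hcon
            obtain ⟨hu, hv'⟩ := lin2 (hcon (T 0)) (hcon (T 1)) (hIndep 0 1 (by decide))
            rw [er0] at hu; rw [er1] at hv'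
            exact hrz ⟨hu, hv'⟩
          have hdel : del f 2 (a jj) (b jj) = fun y => (a jj * r 0 + b jj * r 1) * w y := by
            funext y
            rw [del2]
            have e1' : f ![y 0, y 1, 0] = r 0 * w ![y 0, y 1] := hf ![y 0, y 1, 0]
            have e2' : f ![y 0, y 1, 1] = r 1 * w ![y 0, y 1] := hf ![y 0, y 1, 1]
            rw [e1', e2', ← vec2_eq y]
            ring
          have hwPT : IsProductType w := by
            have hpt1 : IsProductType (fun y => (a jj * r 0 + b jj * r 1) * w y) :=
              hdel ▸ hprod 2 jj
            have hpt2 := isProductType_smul (a jj * r 0 + b jj * r 1)⁻¹ hpt1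
            have heq : (fun y => (a jj * r 0 + b jj * r 1)⁻¹
                * ((a jj * r 0 + b jj * r 1) * w y)) = w := by
              funext y; field_simp
            rwa [heq] at hpt2
          exact isProductType_glue f 2 r w hwPT (fun x => by rw [sA2 x]; exact hf x)
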